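/- arXiv:1809.06761 — 6 statements merged into one kernel-verified Lean document; each statement's English description precedes it below -/
import Mathlib

section
/- Let ⊢ be a finitary logic and X an r-direct system of matrices each of which is a nontrivial model of ⊢. Then the Płonka sum of X is a model of the containment companion ⊢^r: whenever Γ ⊢^r φ and h is an evaluation into the Płonka sum with h[Γ] ⊆ ⋃_{i ∈ I} F_i, then h(φ) ∈ ⋃_{i ∈ I} F_i. -/
/-!
A term evaluated in the Płonka sum lands in the component indexed by the join of the indices of
its variables, and the transition maps carry its value there to its value in any component
above. So for a finitary derivation `Δ ⊢ φ` with `Var φ ⊆ Var Δ`, everything can be evaluated in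
the single component `j` = join of the indices of the values of `Δ`. Its filter is nonempty since
`I⁺` is closed under joins, so `f_ij⁻¹[F_j] = F_i` transfers filter membership to and from `j`,
where the component is a model of `⊢`. For an antitheorem, shifting its variables up frees `x₀`,
which is then sent outside the filter of that component, contradicting `Δ ⊢ x₀`.
-/

open FirstOrder FirstOrder.Language

variable {L : FirstOrder.Language.{0, 0}}

/-- The set of variables occurring in a formula (term). -/
def Tvar (φ : L.Term ℕ) : Set ℕ := {x | x ∈ φ.varFinset}

/-- The set of variables occurring in a set of formulas. -/
def SVar (Γ : Set (L.Term ℕ)) : Set ℕ := ⋃ γ ∈ Γ, Tvar γ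

/-- The image of a set of formulas under a substitution. -/
def SubstImg (σ : ℕ → L.Term ℕ) (Γ : Set (L.Term ℕ)) : Set (L.Term ℕ) :=
  (fun ψ => ψ.subst σ) '' Γ

/-- A logic: a substitution-invariant consequence relation on formulas. -/
structure ConsLogic (L : FirstOrder.Language.{0, 0}) where
  deriv : Set (L.Term ℕ) → L.Term ℕ → Prop
  refl : ∀ Γ φ, φ ∈ Γ → deriv Γ φ
  mono : ∀ Γ Δ φ, Γ ⊆ Δ → deriv Γ φ → deriv Δ φ
  cut : ∀ Γ Δ φ, (∀ δ ∈ Δ, deriv Γ δ) → deriv (Γ ∪ Δ) φ → deriv Γ φ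
  substInv : ∀ Γ φ (σ : ℕ → L.Term ℕ), deriv Γ φ → deriv (SubstImg σ Γ) (φ.subst σ)

/-- A consequence relation is finitary. -/
def FinitaryRel (R : Set (L.Term ℕ) → L.Term ℕ → Prop) : Prop :=
  ∀ Γ φ, R Γ φ → ∃ Δ : Finset (L.Term ℕ), ↑Δ ⊆ Γ ∧ R ↑Δ φ

/-- Σ is an antitheorem of the consequence relation `R`. -/
def IsAntitheorem (R : Set (L.Term ℕ) → L.Term ℕ → Prop) (S : Set (L.Term ℕ)) : Prop :=
  ∀ (σ : ℕ → L.Term ℕ) (φ : L.Term ℕ), R (SubstImg σ S) φ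

/-- The containment companion of a logic. -/
def CC (V : ConsLogic L) (Γ : Set (L.Term ℕ)) (φ : L.Term ℕ) : Prop :=
  (V.deriv Γ φ ∧ Tvar φ ⊆ SVar Γ) ∨ ∃ S, IsAntitheorem V.deriv S ∧ S ⊆ Γ

/-- The matrix ⟨A, F⟩ is a model of the consequence relation `R`. -/
def IsMatrixModel (R : Set (L.Term ℕ) → L.Term ℕ → Prop) (A : Type) [L.Structure A]
    (F : Set A) : Prop :=
  ∀ Γ φ, R Γ φ → ∀ h : ℕ → A, (∀ γ ∈ Γ, Term.realize h γ ∈ F) → Term.realize h φ ∈ F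

/-- An isomorphism of matrices: an isomorphism of the underlying algebras mapping the
filter exactly onto the filter. -/
def MatrixIso (A : Type) [L.Structure A] (F : Set A) (B : Type) [L.Structure B]
    (G : Set B) : Prop :=
  ∃ e : L.Equiv A B, ∀ a, a ∈ F ↔ e a ∈ G

/-- The one-element structure. -/
def punitStruct : L.Structure PUnit where
  funMap _ _ := PUnit.unit
  RelMap _ _ := False

/-- An r-direct system of matrices over the join-semilattice `I`. -/
structure RDirectSystem (L : FirstOrder.Language.{0, 0}) (I : Type) [SemilatticeSup I] where
  A : I → Type
  str : ∀ i, L.Structure (A i)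
  F : ∀ i, Set (A i)
  f : ∀ i j, i ≤ j → A i → A j
  f_hom : ∀ i j (h : i ≤ j) (n : ℕ) (g : L.Functions n) (as : Fin n → A i),
    f i j h (@Structure.funMap L (A i) (str i) n g as) =
      @Structure.funMap L (A j) (str j) n g (fun k => f i j h (as k))
  f_id : ∀ i (a : A i), f i i le_rfl a = a
  f_comp : ∀ i j k (hij : i ≤ j) (hjk : j ≤ k) (a : A i),
    f j k hjk (f i j hij a) = f i k (hij.trans hjk) a
  plus_sup : ∀ i j, (F i).Nonempty → (F j).Nonempty → (F (i ⊔ j)).Nonempty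
  f_filter : ∀ i j (h : i ≤ j), (F j).Nonempty → f i j h ⁻¹' F j = F i

/-- The Płonka sum structure over an r-direct system (the language has no constants). -/
def RDirectSystem.plonkaStr {I : Type} [SemilatticeSup I] (S : RDirectSystem L I)
    [IsEmpty (L.Functions 0)] : L.Structure (Σ i, S.A i) where
  funMap {n} g as :=
    match n, g, as with
    | 0, g, _ => isEmptyElim g
    | (m + 1), g, as =>
      ⟨Finset.univ.sup' Finset.univ_nonempty fun k => (as k).1,
        @Structure.funMap L _ (S.str _) _ g fun k =>
          S.f (as k).1 _ (Finset.le_sup' (fun k => (as k).1) (Finset.mem_univ k)) (as k).2⟩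
  RelMap _ _ := False

/-- The filter of the Płonka sum of an r-direct system of matrices. -/
def RDirectSystem.filter {I : Type} [SemilatticeSup I] (S : RDirectSystem L I) :
    Set (Σ i, S.A i) := {a | a.2 ∈ S.F a.1}


/-- The application `t ∗ u` of the binary term `s` to formulas `t` and `u`. -/
def starT (s : L.Term (Fin 2)) (t u : L.Term ℕ) : L.Term ℕ := s.subst ![t, u]

/-- The result `χ(t, z̄)` of substituting the formula `t` for the variable `v` in `χ`. -/
def substVar (χ : L.Term ℕ) (v : ℕ) (t : L.Term ℕ) : L.Term ℕ :=
  χ.subst (fun m => if m = v then t else Term.var m)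

/-- `(ε, δ)` is an instance of one of the partition-function identities P1–P5,
read as term identities for `∗`. -/
def IsPIdentInstance (s : L.Term (Fin 2)) (ε δ : L.Term ℕ) : Prop :=
  (∃ a, ε = starT s a a ∧ δ = a) ∨
  (∃ a b c, ε = starT s a (starT s b c) ∧ δ = starT s (starT s a b) c) ∨
  (∃ a b c, ε = starT s a (starT s b c) ∧ δ = starT s a (starT s c b)) ∨
  (∃ (n : ℕ) (g : L.Functions (n + 1)) (as : Fin (n + 1) → L.Term ℕ) (b : L.Term ℕ),
    ε = starT s (Term.func g as) b ∧ δ = Term.func g (fun k => starT s (as k) b)) ∨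
  (∃ (n : ℕ) (g : L.Functions (n + 1)) (as : Fin (n + 1) → L.Term ℕ) (b : L.Term ℕ),
    ε = starT s b (Term.func g as) ∧ δ = (List.ofFn as).foldl (starT s) b)

/-- The consequence relation `R` has `s` as an r-partition function. -/
def HasRPartitionFunction (R : Set (L.Term ℕ) → L.Term ℕ → Prop) (s : L.Term (Fin 2)) :
    Prop :=
  (∀ i : Fin 2, i ∈ s.varFinset) ∧
  R {Term.var 0, Term.var 1} (starT s (Term.var 0) (Term.var 1)) ∧
  R {starT s (Term.var 0) (Term.var 1)} (Term.var 0) ∧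
  ∀ ε δ, IsPIdentInstance s ε δ → ∀ (χ : L.Term ℕ) (v : ℕ),
    R {substVar χ v ε} (substVar χ v δ) ∧ R {substVar χ v δ} (substVar χ v ε)

/-- The interpretation of the binary term `s` in the structure `A`. -/
def dotOf (A : Type) [L.Structure A] (s : L.Term (Fin 2)) : A → A → A :=
  fun a b => Term.realize ![a, b] s

/-- A binary operation on an `L`-structure is a partition function. -/
def IsPartitionFunction (A : Type) [L.Structure A] (d : A → A → A) : Prop :=
  (∀ a, d a a = a) ∧
  (∀ a b c, d a (d b c) = d (d a b) c) ∧
  (∀ a b c, d a (d b c) = d a (d c b)) ∧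
  (∀ (n : ℕ) (g : L.Functions (n + 1)) (as : Fin (n + 1) → A) (b : A),
    d (Structure.funMap g as) b = Structure.funMap g (fun k => d (as k) b)) ∧
  (∀ (n : ℕ) (g : L.Functions (n + 1)) (as : Fin (n + 1) → A) (b : A),
    d b (Structure.funMap g as) = (List.ofFn as).foldl d b)

/-- The equivalence relation `a ≈ b` induced by a partition function. -/
def PApprox {A : Type} (d : A → A → A) (a b : A) : Prop := d a b = a ∧ d b a = b

namespace FirstOrder.Language.Term

theorem varFinset_nonempty {L : Language} {α : Type*} [DecidableEq α] [IsEmpty (L.Functions 0)]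
    (t : L.Term α) : t.varFinset.Nonempty := by
  induction t with
  | var x => exact ⟨x, Finset.mem_singleton_self x⟩
  | @func n g ts ih =>
    cases n with
    | zero => exact isEmptyElim g
    | succ m =>
      obtain ⟨x, hx⟩ := ih 0
      exact ⟨x, Finset.mem_biUnion.2 ⟨0, Finset.mem_univ _, hx⟩⟩

theorem zero_notMem_varFinset_subst_succ {L : Language} (t : L.Term ℕ) :
    0 ∉ (t.subst fun n => var (n + 1)).varFinset := by
  induction t with
  | var y => simp [subst, varFinset]
  | func g ts ih => simpa [subst, varFinset] using ih

end FirstOrder.Language.Term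

theorem exists_finset_subset_and_tvar_subset_sVar {Γ : Set (L.Term ℕ)} {φ : L.Term ℕ}
    (hφ : Tvar φ ⊆ SVar Γ) :
    ∃ Δ : Finset (L.Term ℕ), ↑Δ ⊆ Γ ∧ Tvar φ ⊆ SVar (Δ : Set (L.Term ℕ)) := by
  have hcover : ∀ x ∈ φ.varFinset, ∃ γ ∈ Γ, x ∈ γ.varFinset := fun x hx => by
    simpa [SVar, Tvar] using hφ hx
  choose c hcΓ hxc using hcover
  classical
  refine ⟨φ.varFinset.attach.image fun x => c x.1 x.2, ?_, fun x hx => ?_⟩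
  · intro γ hγ
    obtain ⟨x, -, rfl⟩ := Finset.mem_image.1 hγ
    exact hcΓ x.1 x.2
  · exact Set.mem_biUnion (Finset.mem_image_of_mem _ (Finset.mem_attach _ ⟨x, hx⟩)) (hxc x hx)

namespace RDirectSystem

variable {I : Type} [SemilatticeSup I] (S : RDirectSystem L I) {α : Type*}

theorem mem_filter_iff_map_mem {a : Σ i, S.A i} {j : I} (hle : a.1 ≤ j) (hj : (S.F j).Nonempty) :
    a ∈ S.filter ↔ S.f _ j hle a.2 ∈ S.F j :=
  (Set.ext_iff.1 (S.f_filter _ j hle hj) a.2).symm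

theorem nonempty_F_sup' {β : Type*} (s : Finset β) (hs : s.Nonempty) (e : β → Σ i, S.A i)
    (he : ∀ b ∈ s, e b ∈ S.filter) : (S.F (s.sup' hs fun b => (e b).1)).Nonempty :=
  Finset.sup'_induction hs _ (fun i hi k hk => S.plus_sup i k hi hk) fun b hb => ⟨_, he b hb⟩

open Classical in
noncomputable def transportEval (h : α → Σ i, S.A i) (j : I) (a : S.A j) : α → S.A j :=
  fun x => if hx : (h x).1 ≤ j then S.f _ j hx (h x).2 else a

theorem transportEval_of_le {h : α → Σ i, S.A i} {j : I} (a : S.A j) {x : α}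
    (hx : (h x).1 ≤ j) : S.transportEval h j a x = S.f _ j hx (h x).2 := by
  rw [transportEval, dif_pos hx]

variable [IsEmpty (L.Functions 0)] [DecidableEq α]

attribute [local instance] plonkaStr str

theorem le_realize_fst (h : α → Σ i, S.A i) {t : L.Term α} {x : α} (hx : x ∈ t.varFinset) :
    (h x).1 ≤ (t.realize h).1 := by
  induction t with
  | var y =>
    rw [Term.varFinset, Finset.mem_singleton] at hx
    subst hx
    exact le_rfl
  | @func n g ts ih =>
    cases n with
    | zero => exact isEmptyElim g
    | succ m =>
      obtain ⟨k, -, hk⟩ := Finset.mem_biUnion.1 hx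
      exact (ih k hk).trans
        (Finset.le_sup' (fun k => ((ts k).realize h).1) (Finset.mem_univ k))

theorem realize_fst_le (h : α → Σ i, S.A i) {t : L.Term α} {j : I}
    (hj : ∀ x ∈ t.varFinset, (h x).1 ≤ j) : (t.realize h).1 ≤ j := by
  induction t with
  | var x => exact hj x (Finset.mem_singleton_self x)
  | @func n g ts ih =>
    cases n with
    | zero => exact isEmptyElim g
    | succ m =>
      exact Finset.sup'_le Finset.univ_nonempty _ fun k _ =>
        ih k fun x hx => hj x (Finset.mem_biUnion.2 ⟨k, Finset.mem_univ _, hx⟩)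

theorem map_realize (h : α → Σ i, S.A i) (t : L.Term α) {j : I} (hle : (t.realize h).1 ≤ j)
    (v : α → S.A j) (hv : ∀ x ∈ t.varFinset, ∀ hx : (h x).1 ≤ j, S.f _ j hx (h x).2 = v x) :
    S.f _ j hle (t.realize h).2 = t.realize v := by
  induction t with
  | var x => exact hv x (Finset.mem_singleton_self x) hle
  | @func n g ts ih =>
    cases n with
    | zero => exact isEmptyElim g
    | succ m =>
      have hts : ∀ k, ((ts k).realize h).1 ≤ ((Term.func g ts).realize h).1 := fun k =>
        Finset.le_sup' (fun k => ((ts k).realize h).1) (Finset.mem_univ k)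
      refine (S.f_hom _ _ hle _ g _).trans (congrArg _ (funext fun k => ?_))
      exact (S.f_comp _ _ _ (hts k) hle _).trans <| ih k ((hts k).trans hle) fun x hx =>
        hv x (Finset.mem_biUnion.2 ⟨k, Finset.mem_univ _, hx⟩)

theorem map_realize_eq_realize_transportEval (h : α → Σ i, S.A i) (t : L.Term α) {j : I}
    (hle : (t.realize h).1 ≤ j) (a : S.A j) :
    S.f _ j hle (t.realize h).2 = t.realize (S.transportEval h j a) :=
  S.map_realize h t hle _ fun _ _ hx => (S.transportEval_of_le a hx).symm

theorem realize_mem_F_of_deriv {R : Set (L.Term ℕ) → L.Term ℕ → Prop} {j : I}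
    (hmod : IsMatrixModel R (S.A j) (S.F j)) (hj : (S.F j).Nonempty) {Γ : Set (L.Term ℕ)}
    {φ : L.Term ℕ} (hder : R Γ φ) (h : ℕ → Σ i, S.A i)
    (hΓ : ∀ γ ∈ Γ, γ.realize h ∈ S.filter ∧ (γ.realize h).1 ≤ j) (v : ℕ → S.A j)
    (hv : ∀ γ ∈ Γ, ∀ x ∈ γ.varFinset, ∀ hx : (h x).1 ≤ j, S.f _ j hx (h x).2 = v x) :
    φ.realize v ∈ S.F j :=
  hmod Γ φ hder v fun γ hγ => by
    rw [← S.map_realize h γ (hΓ γ hγ).2 v (hv γ hγ)]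
    exact (S.mem_filter_iff_map_mem _ hj).1 (hΓ γ hγ).1

variable {V : ConsLogic L} (hmod : ∀ i, IsMatrixModel V.deriv (S.A i) (S.F i))
  (hfin : FinitaryRel V.deriv)
include hmod hfin

theorem realize_mem_filter_of_deriv {Γ : Set (L.Term ℕ)} {φ : L.Term ℕ} (hder : V.deriv Γ φ)
    (hvar : Tvar φ ⊆ SVar Γ) (h : ℕ → Σ i, S.A i) (hΓ : ∀ γ ∈ Γ, γ.realize h ∈ S.filter) :
    φ.realize h ∈ S.filter := by
  obtain ⟨Δ₀, hΔ₀Γ, hΔ₀⟩ := hfin Γ φ hder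
  obtain ⟨Δ₁, hΔ₁Γ, hφΔ₁⟩ := exists_finset_subset_and_tvar_subset_sVar hvar
  classical
  set Δ := Δ₀ ∪ Δ₁
  have hΔΓ : ↑Δ ⊆ Γ := by
    rw [Finset.coe_union]
    exact Set.union_subset hΔ₀Γ hΔ₁Γ
  have hφΔ : ∀ x ∈ φ.varFinset, ∃ δ ∈ Δ, x ∈ δ.varFinset := fun x hx => by
    obtain ⟨δ, hδ, hxδ⟩ : ∃ δ ∈ Δ₁, x ∈ δ.varFinset := by simpa [SVar, Tvar] using hφΔ₁ hx
    exact ⟨δ, Finset.mem_union_right _ hδ, hxδ⟩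
  have hΔne : Δ.Nonempty := by
    obtain ⟨x, hx⟩ := φ.varFinset_nonempty
    obtain ⟨δ, hδ, -⟩ := hφΔ x hx
    exact ⟨δ, hδ⟩
  set j := Δ.sup' hΔne fun δ => (δ.realize h).1
  have hj : (S.F j).Nonempty := S.nonempty_F_sup' Δ hΔne _ fun δ hδ => hΓ δ (hΔΓ hδ)
  have hΔj : ∀ δ ∈ Δ, (δ.realize h).1 ≤ j := fun δ hδ =>
    Finset.le_sup' (fun δ => (δ.realize h).1) hδ
  have hφj : (φ.realize h).1 ≤ j := S.realize_fst_le h fun x hx => by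
    obtain ⟨δ, hδ, hxδ⟩ := hφΔ x hx
    exact (S.le_realize_fst h hxδ).trans (hΔj δ hδ)
  rw [S.mem_filter_iff_map_mem hφj hj, S.map_realize_eq_realize_transportEval h φ hφj hj.some]
  exact S.realize_mem_F_of_deriv (hmod j) hj (V.mono _ _ _ (by simp [Δ]) hΔ₀) h
    (fun δ hδ => ⟨hΓ δ (hΔΓ hδ), hΔj δ hδ⟩) _ fun _ _ _ _ hx => (S.transportEval_of_le _ hx).symm

theorem exists_realize_notMem_filter_of_isAntitheorem (hnontriv : ∀ i, S.F i ≠ Set.univ)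
    {T : Set (L.Term ℕ)} (hT : IsAntitheorem V.deriv T) (h : ℕ → Σ i, S.A i) :
    ∃ γ ∈ T, γ.realize h ∉ S.filter := by
  by_contra! hTh
  obtain ⟨Δ, hΔT, hΔ⟩ := hfin _ _ (hT (fun n => Term.var (n + 1)) (Term.var 0))
  set g : ℕ → Σ i, S.A i := fun n => h (n - 1)
  have hΔg : ∀ δ ∈ Δ, δ.realize g ∈ S.filter ∧ 0 ∉ δ.varFinset := fun δ hδ => by
    obtain ⟨γ, hγ, rfl⟩ := hΔT hδ
    exact ⟨by simpa [Term.realize_subst, g] using hTh γ hγ, γ.zero_notMem_varFinset_subst_succ⟩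
  rcases Δ.eq_empty_or_nonempty with rfl | hΔne
  · obtain ⟨a, ha⟩ := (Set.ne_univ_iff_exists_notMem _).1 (hnontriv (h 0).1)
    exact ha (hmod _ _ _ hΔ (fun _ => a) (by simp))
  set j := Δ.sup' hΔne fun δ => (δ.realize g).1
  have hj : (S.F j).Nonempty := S.nonempty_F_sup' Δ hΔne _ fun δ hδ => (hΔg δ hδ).1
  obtain ⟨a, ha⟩ := (Set.ne_univ_iff_exists_notMem _).1 (hnontriv j)
  refine ha ?_
  simpa using S.realize_mem_F_of_deriv (hmod j) hj hΔ g
    (fun δ hδ => ⟨(hΔg δ hδ).1, Finset.le_sup' (fun δ => (δ.realize g).1) hδ⟩)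
    (Function.update (S.transportEval g j a) 0 a) fun δ hδ x hx hxj => by
      rw [Function.update_of_ne (ne_of_mem_of_not_mem hx (hΔg δ hδ).2), S.transportEval_of_le]

end RDirectSystem

/-- Let `⊢` be a finitary logic and `X` an r-direct system of matrices,
each of which is a nontrivial model of `⊢`.  Then the Płonka sum of `X` is a model of the
containment companion `⊢^r`. -/
theorem statement_1 (L : FirstOrder.Language.{0, 0}) [IsEmpty (L.Functions 0)]
    (V : ConsLogic L) (hfin : FinitaryRel V.deriv)
    (I : Type) [SemilatticeSup I] (S : RDirectSystem L I)
    (hmod : ∀ i, @IsMatrixModel L V.deriv (S.A i) (S.str i) (S.F i))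
    (hnontriv : ∀ i, S.F i ≠ Set.univ)
    (Γ : Set (L.Term ℕ)) (φ : L.Term ℕ) (hder : CC V Γ φ)
    (h : ℕ → (Σ i, S.A i))
    (hΓ : ∀ γ ∈ Γ, @Term.realize L (Σ i, S.A i) S.plonkaStr ℕ h γ ∈ S.filter) :
    @Term.realize L (Σ i, S.A i) S.plonkaStr ℕ h φ ∈ S.filter := by
  rcases hder with ⟨hder, hvar⟩ | ⟨T, hT, hTΓ⟩
  · exact S.realize_mem_filter_of_deriv hmod hfin hder hvar h hΓ
  · obtain ⟨γ, hγT, hγ⟩ := S.exists_realize_notMem_filter_of_isAntitheorem hmod hfin hnontriv hT h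
    exact absurd (hΓ γ (hTΓ hγT)) hγ
end

section
/- Let ⊢ be a logic with r-partition function ∗, and let ⟨A, F⟩ be a model of ⊢ such that the interpretation · of the term ∗ in A is a partition function on A. Then: (a) for all a, b, c ∈ A, if b ≈ c and c ∈ F, then a·b ∈ F if and only if a ∈ F (i.e., whenever the ≈-class of b meets F, the Płonka homomorphism x ↦ x·b reflects and preserves membership in F); and (b) for all a, b ∈ F, a·b ∈ F (so the set of ≈-classes meeting F is closed under the join [a] ∨ [b] = [a·b]). -/
open FirstOrder FirstOrder.Language

variable {L : FirstOrder.Language.{0, 0}}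

/-! The model property turns the rules `x, y ⊢ x ∗ y` and `x ∗ y ⊢ x` into closure of `F` under `·`
and reflection of membership from `a · b` to `a`. For (a), `b ≈ c` together with P3 gives
`a · b = a · (b · c) = a · (c · b) = a · c`, which reduces it to the case `b = c ∈ F`. -/

theorem realize_starT {A : Type} [L.Structure A] (s : L.Term (Fin 2)) (v : ℕ → A)
    (t u : L.Term ℕ) :
    (starT s t u).realize v = dotOf A s (t.realize v) (u.realize v) := by
  rw [starT, Term.realize_subst, dotOf]
  congr 1
  funext i
  fin_cases i <;> rfl

theorem PApprox.dot_right_eq {A : Type} {d : A → A → A}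
    (hcomm : ∀ a b c, d a (d b c) = d a (d c b)) {b c : A} (hbc : PApprox d b c) (a : A) :
    d a b = d a c :=
  calc d a b = d a (d b c) := by rw [hbc.1]
    _ = d a (d c b) := hcomm a b c
    _ = d a c := by rw [hbc.2]

section MatrixModel

variable {R : Set (L.Term ℕ) → L.Term ℕ → Prop} {A : Type} [L.Structure A] {F : Set A}
  {s : L.Term (Fin 2)}

theorem IsMatrixModel.dotOf_mem (hmod : IsMatrixModel R A F)
    (hintro : R {Term.var 0, Term.var 1} (starT s (Term.var 0) (Term.var 1)))
    {a b : A} (ha : a ∈ F) (hb : b ∈ F) : dotOf A s a b ∈ F := by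
  have h := hmod _ _ hintro (fun n => if n = 0 then a else b)
  rw [realize_starT] at h
  refine h ?_
  rintro γ (rfl | rfl) <;> simpa

theorem IsMatrixModel.mem_of_dotOf_mem (hmod : IsMatrixModel R A F)
    (helim : R {starT s (Term.var 0) (Term.var 1)} (Term.var 0))
    {a b : A} (hab : dotOf A s a b ∈ F) : a ∈ F := by
  refine hmod _ _ helim (fun n => if n = 0 then a else b) ?_
  rintro γ rfl
  simpa [realize_starT] using hab

end MatrixModel

theorem statement_3_general (L : FirstOrder.Language.{0, 0})
    (V : ConsLogic L) (s : L.Term (Fin 2))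
    (hpf : HasRPartitionFunction V.deriv s)
    (A : Type) [L.Structure A] (F : Set A)
    (hmod : IsMatrixModel V.deriv A F)
    (hpart : IsPartitionFunction (L := L) A (dotOf A s)) :
    (∀ a b c : A, PApprox (dotOf A s) b c → c ∈ F → (dotOf A s a b ∈ F ↔ a ∈ F)) ∧
    (∀ a b : A, a ∈ F → b ∈ F → dotOf A s a b ∈ F) := by
  obtain ⟨-, hintro, helim, -⟩ := hpf
  obtain ⟨-, -, hcomm, -⟩ := hpart
  refine ⟨fun a b c hbc hc => ?_, fun a b => hmod.dotOf_mem hintro⟩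
  rw [hbc.dot_right_eq hcomm a]
  exact ⟨hmod.mem_of_dotOf_mem helim, fun ha => hmod.dotOf_mem hintro ha hc⟩

/-- Let `⊢` be a logic with r-partition function `∗`, and `⟨A, F⟩` a
model of `⊢` such that the interpretation `·` of `∗` in `A` is a partition function.
Then (a) whenever `b ≈ c` and `c ∈ F`, one has `a·b ∈ F ↔ a ∈ F`, and
(b) `F` is closed under `·`. -/
theorem statement_3 (L : FirstOrder.Language.{0, 0}) [IsEmpty (L.Functions 0)]
    (V : ConsLogic L) (s : L.Term (Fin 2))
    (hpf : HasRPartitionFunction V.deriv s)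
    (A : Type) [L.Structure A] (F : Set A)
    (hmod : IsMatrixModel V.deriv A F)
    (hpart : IsPartitionFunction (L := L) A (dotOf A s)) :
    (∀ a b c : A, PApprox (dotOf A s) b c → c ∈ F → (dotOf A s a b ∈ F ↔ a ∈ F)) ∧
    (∀ a b : A, a ∈ F → b ∈ F → dotOf A s a b ∈ F) :=
  statement_3_general L V s hpf A F hmod hpart
end

section
/- Let ⊢ be a logic with r-partition function ∗ and with an antitheorem Σ all of whose members contain at most the single variable x. Then every rule of the calculus H^r is valid in the containment companion ⊢^r, namely: (H0) if ∅ ⊢ φ then {y∗φ} ⊢^r φ for every variable y; (H1) {x, y} ⊢^r x∗y; (H2) {x∗y} ⊢^r x; (H3) if Γ ⊢ ψ and γ ∈ Γ, then (Γ ∖ {γ}) ∪ {γ∗ψ} ⊢^r ψ; (H4) Σ ⊢^r α for every formula α; (H5) χ(ε, z̄) ⊣⊢^r χ(δ, z̄) for every formula χ(v, z̄) and every identity ε ≈ δ among the partition-function identities P1–P5 read as term identities for ∗. -/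
open FirstOrder FirstOrder.Language

variable {L : FirstOrder.Language.{0, 0}}

/-! Apart from (H4), which is the antitheorem clause of `⊢^r`, every rule of `H^r` is already
a rule of `⊢` (for (H3): `γ` follows from `γ ∗ ψ`, then `ψ` by cut), so only the variable
condition of `⊢^r` needs checking. Since both variables occur in `x ∗ y`, the variables of
`t ∗ u` are those of `t` and `u`; hence the two sides of each identity P1–P5 have the same
variables, and so do `χ(ε, z̄)` and `χ(δ, z̄)`. -/

namespace FirstOrder.Language.Term

theorem subst_subst {α β γ : Type} (t : L.Term α) (f : α → L.Term β) (g : β → L.Term γ) :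
    (t.subst f).subst g = t.subst fun i => (f i).subst g := by
  induction t with
  | var => rfl
  | func _ _ ih => simp only [subst, ih]

theorem mem_varFinset_subst {α β : Type} [DecidableEq α] [DecidableEq β] (t : L.Term α)
    (f : α → L.Term β) (m : β) :
    m ∈ (t.subst f).varFinset ↔ ∃ k ∈ t.varFinset, m ∈ (f k).varFinset := by
  induction t with
  | var => simp [subst, varFinset]
  | func _ ts ih =>
    simp only [subst, varFinset, Finset.mem_biUnion, Finset.mem_univ, true_and, ih]
    tauto

end FirstOrder.Language.Term

open Set

theorem SVar_singleton (φ : L.Term ℕ) : SVar ({φ} : Set (L.Term ℕ)) = Tvar φ := by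
  simp [SVar]

theorem Tvar_subset_SVar {Γ : Set (L.Term ℕ)} {γ : L.Term ℕ} (h : γ ∈ Γ) :
    Tvar γ ⊆ SVar Γ :=
  subset_biUnion_of_mem h

theorem Tvar_func {n : ℕ} (g : L.Functions n) (ts : Fin n → L.Term ℕ) :
    Tvar (Term.func g ts) = ⋃ k, Tvar (ts k) := by
  ext m
  simp [Tvar, Term.varFinset]

theorem Tvar_substVar_mono (χ : L.Term ℕ) (v : ℕ) {ε δ : L.Term ℕ} (h : Tvar ε ⊆ Tvar δ) :
    Tvar (substVar χ v ε) ⊆ Tvar (substVar χ v δ) := by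
  simp only [Tvar, substVar, subset_def, mem_ofPred_eq, Term.mem_varFinset_subst]
  rintro m ⟨k, hk, hm⟩
  refine ⟨k, hk, ?_⟩
  split_ifs at hm ⊢
  exacts [h hm, hm]

section PartitionTerm

variable (s : L.Term (Fin 2))

theorem starT_subst (t u : L.Term ℕ) (σ : ℕ → L.Term ℕ) :
    (starT s t u).subst σ = starT s (t.subst σ) (u.subst σ) := by
  simp only [starT, Term.subst_subst]
  congr 1
  funext i
  fin_cases i <;> rfl

variable {s} (hs : ∀ i : Fin 2, i ∈ s.varFinset)
include hs

theorem Tvar_starT (t u : L.Term ℕ) : Tvar (starT s t u) = Tvar t ∪ Tvar u := by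
  ext m
  simp only [Tvar, starT, mem_union, mem_ofPred_eq, Term.mem_varFinset_subst]
  constructor
  · rintro ⟨k, -, hm⟩
    fin_cases k
    exacts [Or.inl hm, Or.inr hm]
  · rintro (hm | hm)
    exacts [⟨0, hs 0, hm⟩, ⟨1, hs 1, hm⟩]

theorem Tvar_foldl_starT (l : List (L.Term ℕ)) (b : L.Term ℕ) :
    Tvar (l.foldl (starT s) b) = Tvar b ∪ ⋃ a ∈ l, Tvar a := by
  induction l generalizing b with
  | nil => simp
  | cons a l ih =>
    simp only [List.foldl_cons, ih, Tvar_starT hs, List.mem_cons, iUnion_iUnion_eq_or_left,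
      union_assoc]

theorem IsPIdentInstance.Tvar_eq {ε δ : L.Term ℕ} (h : IsPIdentInstance s ε δ) :
    Tvar ε = Tvar δ := by
  rcases h with ⟨a, rfl, rfl⟩ | ⟨a, b, c, rfl, rfl⟩ | ⟨a, b, c, rfl, rfl⟩ |
    ⟨n, g, as, b, rfl, rfl⟩ | ⟨n, g, as, b, rfl, rfl⟩
  · rw [Tvar_starT hs, union_self]
  · simp only [Tvar_starT hs, union_assoc]
  · simp only [Tvar_starT hs, union_comm (Tvar b)]
  · simp only [Tvar_starT hs, Tvar_func, iUnion_union]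
  · simp only [Tvar_starT hs, Tvar_func, Tvar_foldl_starT hs, List.mem_ofFn', biUnion_range]

end PartitionTerm

namespace ConsLogic

variable (V : ConsLogic L) {s : L.Term (Fin 2)}
  (hleft : V.deriv {starT s (Term.var 0) (Term.var 1)} (Term.var 0))
include hleft

theorem deriv_starT_left (t u : L.Term ℕ) : V.deriv {starT s t u} t := by
  simpa [SubstImg, starT_subst] using V.substInv _ _ (fun n => if n = 0 then t else u) hleft

theorem deriv_diff_union_starT {Γ : Set (L.Term ℕ)} {ψ γ : L.Term ℕ} (hΓ : V.deriv Γ ψ)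
    (hγ : γ ∈ Γ) : V.deriv ((Γ \ {γ}) ∪ {starT s γ ψ}) ψ := by
  set Δ := (Γ \ {γ}) ∪ {starT s γ ψ}
  have hΔΓ : ∀ δ ∈ Γ, V.deriv Δ δ := by
    intro δ hδ
    by_cases hδγ : δ = γ
    · subst hδγ
      exact V.mono _ _ _ subset_union_right (V.deriv_starT_left hleft δ ψ)
    · exact V.refl _ _ (Or.inl ⟨hδ, hδγ⟩)
  exact V.cut Δ Γ ψ hΔΓ (V.mono _ _ _ subset_union_right hΓ)

end ConsLogic

theorem CC_singleton_of_deriv (V : ConsLogic L) {γ φ : L.Term ℕ} (h : V.deriv {γ} φ)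
    (hvar : Tvar φ ⊆ Tvar γ) : CC V {γ} φ :=
  Or.inl ⟨h, by rwa [SVar_singleton]⟩

theorem statement_5_general (L : FirstOrder.Language.{0, 0})
    (V : ConsLogic L) (s : L.Term (Fin 2))
    (hpf : HasRPartitionFunction V.deriv s)
    (Sg : Set (L.Term ℕ)) (hanti : IsAntitheorem V.deriv Sg) :
    -- (H0)
    (∀ φ : L.Term ℕ, V.deriv ∅ φ → ∀ y : ℕ, CC V {starT s (Term.var y) φ} φ) ∧
    -- (H1)
    CC V {Term.var 0, Term.var 1} (starT s (Term.var 0) (Term.var 1)) ∧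
    -- (H2)
    CC V {starT s (Term.var 0) (Term.var 1)} (Term.var 0) ∧
    -- (H3)
    (∀ (Γ : Set (L.Term ℕ)) (ψ γ : L.Term ℕ), V.deriv Γ ψ → γ ∈ Γ →
      CC V ((Γ \ {γ}) ∪ {starT s γ ψ}) ψ) ∧
    -- (H4)
    (∀ α : L.Term ℕ, CC V Sg α) ∧
    -- (H5)
    (∀ ε δ, IsPIdentInstance s ε δ → ∀ (χ : L.Term ℕ) (v : ℕ),
      CC V {substVar χ v ε} (substVar χ v δ) ∧ CC V {substVar χ v δ} (substVar χ v ε)) := by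
  obtain ⟨hs, h1, h2, h5⟩ := hpf
  refine ⟨fun φ hφ y => ?_, ?_, ?_, fun Γ ψ γ hΓ hγ => ?_, fun α => Or.inr ⟨Sg, hanti, subset_rfl⟩,
    fun ε δ hεδ χ v => ?_⟩
  · refine CC_singleton_of_deriv V (V.mono _ _ _ (empty_subset _) hφ) ?_
    rw [Tvar_starT hs]
    exact subset_union_right
  · refine Or.inl ⟨h1, ?_⟩
    rw [Tvar_starT hs]
    exact union_subset (Tvar_subset_SVar (mem_insert _ _))
      (Tvar_subset_SVar (mem_insert_of_mem _ rfl))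
  · refine CC_singleton_of_deriv V h2 ?_
    rw [Tvar_starT hs]
    exact subset_union_left
  · refine Or.inl ⟨V.deriv_diff_union_starT h2 hΓ hγ, ?_⟩
    refine Subset.trans ?_ (Tvar_subset_SVar (mem_union_right _ rfl))
    rw [Tvar_starT hs]
    exact subset_union_right
  · have hvar := hεδ.Tvar_eq hs
    exact ⟨CC_singleton_of_deriv V (h5 ε δ hεδ χ v).1 (Tvar_substVar_mono χ v hvar.ge),
      CC_singleton_of_deriv V (h5 ε δ hεδ χ v).2 (Tvar_substVar_mono χ v hvar.le)⟩

/-- Let `⊢` be a logic with r-partition function `∗` and with an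
antitheorem `Σ` all of whose members contain at most the single variable `x`.  Then every
rule of the calculus `H^r` is valid in the containment companion `⊢^r`. -/
theorem statement_5 (L : FirstOrder.Language.{0, 0}) [IsEmpty (L.Functions 0)]
    (V : ConsLogic L) (s : L.Term (Fin 2))
    (hpf : HasRPartitionFunction V.deriv s)
    (Sg : Set (L.Term ℕ)) (hanti : IsAntitheorem V.deriv Sg)
    (x : ℕ) (hvar : ∀ ψ ∈ Sg, Tvar ψ ⊆ {x}) :
    -- (H0)
    (∀ φ : L.Term ℕ, V.deriv ∅ φ → ∀ y : ℕ, CC V {starT s (Term.var y) φ} φ) ∧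
    -- (H1)
    CC V {Term.var 0, Term.var 1} (starT s (Term.var 0) (Term.var 1)) ∧
    -- (H2)
    CC V {starT s (Term.var 0) (Term.var 1)} (Term.var 0) ∧
    -- (H3)
    (∀ (Γ : Set (L.Term ℕ)) (ψ γ : L.Term ℕ), V.deriv Γ ψ → γ ∈ Γ →
      CC V ((Γ \ {γ}) ∪ {starT s γ ψ}) ψ) ∧
    -- (H4)
    (∀ α : L.Term ℕ, CC V Sg α) ∧
    -- (H5)
    (∀ ε δ, IsPIdentInstance s ε δ → ∀ (χ : L.Term ℕ) (v : ℕ),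
      CC V {substVar χ v ε} (substVar χ v δ) ∧ CC V {substVar χ v δ} (substVar χ v ε)) :=
  statement_5_general L V s hpf Sg hanti
end

section
/- If ⊢ is a finitary logic, then its containment companion ⊢^r is finitary: whenever Γ ⊢^r φ, there exists a finite subset Δ ⊆ Γ such that Δ ⊢^r φ. -/
open FirstOrder FirstOrder.Language

variable {L : FirstOrder.Language.{0, 0}}

theorem FirstOrder.Language.Term.subst_subst_s6 {α β γ : Type*} (t : L.Term α) (σ : α → L.Term β)
    (ρ : β → L.Term γ) : (t.subst σ).subst ρ = t.subst fun n => (σ n).subst ρ := by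
  induction t with
  | var => rfl
  | func f ts ih => simp only [Term.subst, ih]

lemma substImg_substImg (σ ρ : ℕ → L.Term ℕ) (Γ : Set (L.Term ℕ)) :
    SubstImg ρ (SubstImg σ Γ) = SubstImg (fun n => (σ n).subst ρ) Γ := by
  simp only [SubstImg, Set.image_image, Term.subst_subst_s6]

lemma sVar_mono {Γ Δ : Set (L.Term ℕ)} (h : Γ ⊆ Δ) : SVar Γ ⊆ SVar Δ :=
  Set.biUnion_subset_biUnion_left h

lemma exists_finset_subset_sVar {Γ : Set (L.Term ℕ)} {s : Set ℕ} (hs : s.Finite)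
    (h : s ⊆ SVar Γ) : ∃ E : Finset (L.Term ℕ), ↑E ⊆ Γ ∧ s ⊆ SVar (E : Set (L.Term ℕ)) := by
  classical
  rw [SVar, Set.biUnion_eq_iUnion] at h
  obtain ⟨I, hI, hsI⟩ := Set.finite_subset_iUnion hs h
  refine ⟨(hI.image Subtype.val).toFinset, by simp, hsI.trans ?_⟩
  exact Set.iUnion₂_subset fun γ hγ => Set.subset_biUnion_of_mem (u := Tvar)
    ((Set.Finite.mem_toFinset _).2 (Set.mem_image_of_mem _ hγ))

/-- Renaming the variables of `S` to even ones frees the variable `1`, so a derivation of `1` from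
the renamed set instantiates to any substitution instance of `S` and any conclusion. -/
lemma isAntitheorem_iff_deriv_var_one (V : ConsLogic L) {S : Set (L.Term ℕ)} :
    IsAntitheorem V.deriv S ↔
      V.deriv (SubstImg (fun n => Term.var (2 * n)) S) (Term.var 1) := by
  refine ⟨fun h => h _ _, fun h τ φ => ?_⟩
  have hτ : (fun n => ((Term.var (2 * n) : L.Term ℕ)).subst
      fun m => if m = 1 then φ else τ (m / 2)) = τ := by
    funext n
    simp [Term.subst, show 2 * n ≠ 1 by omega]
  simpa [substImg_substImg, hτ, Term.subst] using
    V.substInv _ _ (fun m => if m = 1 then φ else τ (m / 2)) h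

lemma IsAntitheorem.exists_finset {V : ConsLogic L} (hfin : FinitaryRel V.deriv)
    {S : Set (L.Term ℕ)} (hS : IsAntitheorem V.deriv S) :
    ∃ S₀ : Finset (L.Term ℕ), ↑S₀ ⊆ S ∧ IsAntitheorem V.deriv ↑S₀ := by
  classical
  obtain ⟨Δ, hΔ, hder⟩ := hfin _ _ ((isAntitheorem_iff_deriv_var_one V).mp hS)
  obtain ⟨S₀, hS₀, rfl⟩ := Finset.subset_set_image_iff.mp hΔ
  refine ⟨S₀, hS₀, (isAntitheorem_iff_deriv_var_one V).mpr ?_⟩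
  rwa [Finset.coe_image] at hder

theorem statement_6_general (L : FirstOrder.Language.{0, 0})
    (V : ConsLogic L) (hfin : FinitaryRel V.deriv) :
    ∀ (Γ : Set (L.Term ℕ)) (φ : L.Term ℕ), CC V Γ φ →
      ∃ Δ : Finset (L.Term ℕ), ↑Δ ⊆ Γ ∧ CC V ↑Δ φ := by
  classical
  rintro Γ φ (⟨hder, hvar⟩ | ⟨S, hS, hSΓ⟩)
  · obtain ⟨Δ, hΔΓ, hΔ⟩ := hfin Γ φ hder
    obtain ⟨E, hEΓ, hE⟩ := exists_finset_subset_sVar φ.varFinset.finite_toSet hvar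
    refine ⟨Δ ∪ E, by simpa using And.intro hΔΓ hEΓ, Or.inl ⟨?_, ?_⟩⟩
    · exact V.mono _ _ _ (by simp) hΔ
    · exact hE.trans (sVar_mono (by simp))
  · obtain ⟨S₀, hS₀S, hS₀⟩ := hS.exists_finset hfin
    exact ⟨S₀, hS₀S.trans hSΓ, Or.inr ⟨_, hS₀, subset_rfl⟩⟩

/-- If `⊢` is a finitary logic, then its containment companion `⊢^r` is
finitary. -/
theorem statement_6 (L : FirstOrder.Language.{0, 0}) [IsEmpty (L.Functions 0)]
    (V : ConsLogic L) (hfin : FinitaryRel V.deriv) :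
    ∀ (Γ : Set (L.Term ℕ)) (φ : L.Term ℕ), CC V Γ φ →
      ∃ Δ : Finset (L.Term ℕ), ↑Δ ⊆ Γ ∧ CC V ↑Δ φ :=
  statement_6_general L V hfin
end

section
/- Let A be a set and · : A × A → A a binary operation satisfying (P1) a·a = a, (P2) a·(b·c) = (a·b)·c, and (P3) a·(b·c) = a·(c·b), and let ≈ be the equivalence relation a ≈ b iff (a·b = a and b·a = b). Then the operation on equivalence classes given by [a] ∨ [b] := [a·b] is well-defined (i.e., a ≈ a' and b ≈ b' imply a·b ≈ a'·b'), and it makes the quotient A/≈ a semilattice: ∨ is idempotent, commutative, and associative. -/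
namespace PApprox

variable {A : Type} {d : A → A → A}

theorem refl (hP1 : ∀ a, d a a = a) (a : A) : PApprox d a a :=
  ⟨hP1 a, hP1 a⟩

theorem symm {a b : A} (h : PApprox d a b) : PApprox d b a :=
  ⟨h.2, h.1⟩

theorem of_eq (hP1 : ∀ a, d a a = a) {a b : A} (h : a = b) : PApprox d a b :=
  h ▸ refl hP1 a

theorem mul_right_comm (hP2 : ∀ a b c, d a (d b c) = d (d a b) c)
    (hP3 : ∀ a b c, d a (d b c) = d a (d c b)) (x y z : A) :
    d (d x y) z = d (d x z) y := by
  rw [← hP2, hP3, hP2]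

theorem mul_absorb (hP2 : ∀ a b c, d a (d b c) = d (d a b) c)
    (hP3 : ∀ a b c, d a (d b c) = d a (d c b)) {a a' b b' : A}
    (ha : PApprox d a a') (hb : PApprox d b b') :
    d (d a b) (d a' b') = d a b := by
  rw [hP2, mul_right_comm hP2 hP3 a b a', ha.1, ← hP2, hb.1]

theorem mul (hP2 : ∀ a b c, d a (d b c) = d (d a b) c)
    (hP3 : ∀ a b c, d a (d b c) = d a (d c b)) {a a' b b' : A}
    (ha : PApprox d a a') (hb : PApprox d b b') :
    PApprox d (d a b) (d a' b') :=
  ⟨mul_absorb hP2 hP3 ha hb, mul_absorb hP2 hP3 ha.symm hb.symm⟩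

theorem mul_swap_absorb (hP1 : ∀ a, d a a = a) (hP2 : ∀ a b c, d a (d b c) = d (d a b) c)
    (hP3 : ∀ a b c, d a (d b c) = d a (d c b)) (x y : A) :
    d (d x y) (d y x) = d x y := by
  rw [← hP2, hP2 y y x, hP1, hP3, hP2, hP1]

theorem mul_comm (hP1 : ∀ a, d a a = a) (hP2 : ∀ a b c, d a (d b c) = d (d a b) c)
    (hP3 : ∀ a b c, d a (d b c) = d a (d c b)) (a b : A) :
    PApprox d (d a b) (d b a) :=
  ⟨mul_swap_absorb hP1 hP2 hP3 a b, mul_swap_absorb hP1 hP2 hP3 b a⟩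

end PApprox

/-- If `·` satisfies (P1)–(P3) and `≈` is the induced equivalence
relation, then `[a] ∨ [b] := [a·b]` is well-defined on equivalence classes, and it makes
the quotient `A/≈` a semilattice: `∨` is idempotent, commutative and associative. -/
theorem statement_15 (A : Type) (d : A → A → A)
    (hP1 : ∀ a, d a a = a)
    (hP2 : ∀ a b c, d a (d b c) = d (d a b) c)
    (hP3 : ∀ a b c, d a (d b c) = d a (d c b)) :
    -- well-definedness of `[a] ∨ [b] := [a·b]`
    (∀ a a' b b' : A, PApprox d a a' → PApprox d b b' → PApprox d (d a b) (d a' b')) ∧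
    -- idempotency of `∨` on the quotient
    (∀ a : A, PApprox d (d a a) a) ∧
    -- commutativity of `∨` on the quotient
    (∀ a b : A, PApprox d (d a b) (d b a)) ∧
    -- associativity of `∨` on the quotient
    (∀ a b c : A, PApprox d (d a (d b c)) (d (d a b) c)) :=
  ⟨fun _ _ _ _ ha hb => PApprox.mul hP2 hP3 ha hb,
    fun a => PApprox.of_eq hP1 (hP1 a),
    PApprox.mul_comm hP1 hP2 hP3,
    fun a b c => PApprox.of_eq hP1 (hP2 a b c)⟩
end

section
/- Let A be an L-structure and · a partition function on A, with ≈ the relation a ≈ b iff (a·b = a and b·a = b). Then each ≈-class is closed under the operations of A: for every n-ary operation symbol g (n ≥ 1) and all a_1, …, a_n ∈ A with a_1 ≈ a_2 ≈ … ≈ a_n, one has g^A(a_1, …, a_n) ≈ a_1. Hence every ≈-class is the universe of a substructure of A. -/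
open FirstOrder FirstOrder.Language

variable {L : FirstOrder.Language.{0, 0}}

theorem List.foldl_eq_of_forall_mem {α β : Type*} {f : α → β → α} {a : α} :
    ∀ {l : List β}, (∀ b ∈ l, f a b = a) → l.foldl f a = a
  | [], _ => rfl
  | b :: l, h => by
    rw [List.foldl_cons, h b List.mem_cons_self]
    exact List.foldl_eq_of_forall_mem fun c hc => h c (List.mem_cons_of_mem b hc)

namespace IsPartitionFunction

variable {A : Type} [L.Structure A] {d : A → A → A}

theorem funMap_mul_eq_of_forall (hpart : IsPartitionFunction (L := L) A d) {n : ℕ}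
    (g : L.Functions (n + 1)) {as : Fin (n + 1) → A} {b : A} (h : ∀ k, d (as k) b = as k) :
    d (Structure.funMap g as) b = Structure.funMap g as := by
  obtain ⟨-, -, -, mul_right_funMap, -⟩ := hpart
  rw [mul_right_funMap]
  exact congrArg _ (funext h)

theorem mul_funMap_eq_of_forall (hpart : IsPartitionFunction (L := L) A d) {n : ℕ}
    (g : L.Functions (n + 1)) {as : Fin (n + 1) → A} {b : A} (h : ∀ k, d b (as k) = b) :
    d b (Structure.funMap g as) = b := by
  obtain ⟨-, -, -, -, mul_left_funMap⟩ := hpart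
  rw [mul_left_funMap]
  refine List.foldl_eq_of_forall_mem fun x hx => ?_
  obtain ⟨k, rfl⟩ := List.mem_ofFn.1 hx
  exact h k

end IsPartitionFunction

theorem statement_17_general (L : FirstOrder.Language.{0, 0})
    (A : Type) [L.Structure A] (d : A → A → A)
    (hpart : IsPartitionFunction (L := L) A d)
    (n : ℕ) (g : L.Functions (n + 1)) (as : Fin (n + 1) → A)
    (hsame : ∀ k, PApprox d (as k) (as 0)) :
    PApprox d (Structure.funMap g as) (as 0) :=
  ⟨IsPartitionFunction.funMap_mul_eq_of_forall hpart g fun k => (hsame k).1,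
    IsPartitionFunction.mul_funMap_eq_of_forall hpart g fun k => (hsame k).2⟩

/-- Let `·` be a partition function on an `L`-structure `A`.  Then every
`≈`-class is closed under the operations of `A`: if `a_1 ≈ a_2 ≈ … ≈ a_n`, then
`g(a_1, …, a_n) ≈ a_1`. -/
theorem statement_17 (L : FirstOrder.Language.{0, 0}) [IsEmpty (L.Functions 0)]
    (A : Type) [L.Structure A] (d : A → A → A)
    (hpart : IsPartitionFunction (L := L) A d)
    (n : ℕ) (g : L.Functions (n + 1)) (as : Fin (n + 1) → A)
    (hsame : ∀ k, PApprox d (as k) (as 0)) :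
    PApprox d (Structure.funMap g as) (as 0) :=
  statement_17_general L A d hpart n g as hsame
end
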